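/- arXiv:2011.14033 — 2 statements merged into one kernel-verified Lean document; each statement's English description precedes it below -/
import Mathlib

section
/- Let f : ℝ → ℝ be twice differentiable with f'(t) > 0 and |f''(t)| ≤ f'(t) for all t ∈ ℝ. Then for all z₁ ≠ z₂ ∈ ℝ: (f(z₂) − f(z₁))/(z₂ − z₁) ≥ f'(z₁)·(1 − exp(−|z₁ − z₂|))/|z₁ − z₂| ≥ f'(z₁)·(1 + |z₁ − z₂|)^{-1}. -/
/-! Self-concordance `|f''| ≤ f'` says that `log f'` is `1`-Lipschitz, so
`f' t ≥ f' z₁ · exp (-|t - z₁|)`. Integrating this lower bound from `z₁` to `z₂` gives the first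
inequality; the second is `1 + d ≤ exp d`. -/

open Real Set

lemma lipschitzWith_one_log_of_abs_deriv_le {g : ℝ → ℝ} (hg : Differentiable ℝ g)
    (hpos : ∀ t, 0 < g t) (hle : ∀ t, |deriv g t| ≤ g t) :
    LipschitzWith 1 (fun t => log (g t)) := by
  have hlog : ∀ t, HasDerivAt (fun t => log (g t)) (deriv g t / g t) t := fun t =>
    (hg t).hasDerivAt.log (hpos t).ne'
  refine lipschitzWith_of_nnnorm_deriv_le (fun t => (hlog t).differentiableAt) fun t => ?_
  rw [← NNReal.coe_le_coe, coe_nnnorm, (hlog t).deriv, norm_div, Real.norm_eq_abs,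
    Real.norm_eq_abs, abs_of_pos (hpos t), NNReal.coe_one, div_le_one (hpos t)]
  exact hle t

lemma mul_exp_neg_abs_sub_le_of_abs_deriv_le {g : ℝ → ℝ} (hg : Differentiable ℝ g)
    (hpos : ∀ t, 0 < g t) (hle : ∀ t, |deriv g t| ≤ g t) (x y : ℝ) :
    g x * exp (-|y - x|) ≤ g y := by
  have hdist : log (g x) - log (g y) ≤ |y - x| := by
    simpa [Real.dist_eq, abs_sub_comm] using
      (le_abs_self _).trans ((lipschitzWith_one_log_of_abs_deriv_le hg hpos hle).dist_le_mul x y)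
  calc g x * exp (-|y - x|) = exp (log (g x) - |y - x|) := by
        rw [exp_sub, exp_log (hpos x), exp_neg, div_eq_mul_inv]
    _ ≤ exp (log (g y)) := exp_le_exp.mpr (by linarith)
    _ = g y := exp_log (hpos y)

lemma mul_one_sub_exp_neg_abs_div_abs_le_slope {f g : ℝ → ℝ} {c a b : ℝ}
    (hf : ∀ t, HasDerivAt f (g t) t) (hg : ∀ t, c * exp (-|t - a|) ≤ g t) (hab : a ≠ b) :
    c * (1 - exp (-|a - b|)) / |a - b| ≤ (f b - f a) / (b - a) := by
  set d := b - a with hd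
  have hd0 : d ≠ 0 := sub_ne_zero.mpr hab.symm
  have hdabs : |a - b| = |d| := abs_sub_comm a b
  -- `φ' s = g (a + s d) - c exp (-s |d|) ≥ 0`, and `φ 0 ≤ φ 1` is the claim.
  set φ : ℝ → ℝ := fun s => f (a + s * d) / d + c * exp (-(s * |d|)) / |d|
  have hφ : ∀ s, HasDerivAt φ (g (a + s * d) - c * exp (-(s * |d|))) s := by
    intro s
    have h1 := ((hf (a + s * d)).comp s (((hasDerivAt_id s).mul_const d).const_add a)).div_const d
    have h2 := ((((hasDerivAt_id s).mul_const |d|).neg).exp.const_mul c).div_const |d|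
    refine (h1.add h2).congr_deriv ?_
    have habs0 : |d| ≠ 0 := abs_ne_zero.mpr hd0
    simp only [id, Pi.neg_apply]
    field_simp
    ring
  have hmono : MonotoneOn φ (Icc 0 1) := by
    refine monotoneOn_of_hasDerivWithinAt_nonneg (convex_Icc 0 1)
      (fun s _ => (hφ s).continuousAt.continuousWithinAt) (fun s _ => (hφ s).hasDerivWithinAt)
      fun s hs => ?_
    rw [interior_Icc] at hs
    have := hg (a + s * d)
    rw [add_sub_cancel_left, abs_mul, abs_of_pos hs.1] at this
    linarith
  have hφ01 := hmono ⟨le_rfl, zero_le_one⟩ ⟨zero_le_one, le_rfl⟩ zero_le_one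
  simp only [φ, zero_mul, add_zero, neg_zero, exp_zero, mul_one, one_mul] at hφ01
  rw [hdabs, sub_div, mul_sub, sub_div, mul_one]
  simp only [hd, add_sub_cancel] at hφ01 ⊢
  linarith

lemma inv_one_add_le_one_sub_exp_neg_div {d : ℝ} (hd : 0 < d) :
    (1 + d)⁻¹ ≤ (1 - exp (-d)) / d := by
  rw [le_div_iff₀ hd, exp_neg, ← sub_nonneg]
  have := add_one_le_exp d
  field_simp
  nlinarith [exp_pos d]

/-- integral mean bound from scalar self-concordance: if `f : ℝ → ℝ` is
twice differentiable with `f' > 0` and `|f''| ≤ f'`, then for `z₁ ≠ z₂`,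
`(f z₂ − f z₁)/(z₂ − z₁) ≥ f'(z₁)·(1 − exp(−|z₁−z₂|))/|z₁−z₂| ≥ f'(z₁)·(1+|z₁−z₂|)⁻¹`. -/
theorem integral_mean_self_concordance_bound (f : ℝ → ℝ)
    (hf : Differentiable ℝ f) (hf' : Differentiable ℝ (deriv f))
    (hpos : ∀ t : ℝ, 0 < deriv f t)
    (hsc : ∀ t : ℝ, |deriv (deriv f) t| ≤ deriv f t)
    (z₁ z₂ : ℝ) (hne : z₁ ≠ z₂) :
    deriv f z₁ * (1 + |z₁ - z₂|)⁻¹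
        ≤ deriv f z₁ * (1 - Real.exp (-|z₁ - z₂|)) / |z₁ - z₂| ∧
      deriv f z₁ * (1 - Real.exp (-|z₁ - z₂|)) / |z₁ - z₂|
        ≤ (f z₂ - f z₁) / (z₂ - z₁) := by
  have hd : 0 < |z₁ - z₂| := abs_pos.mpr (sub_ne_zero.mpr hne)
  refine ⟨?_, ?_⟩
  · rw [mul_div_assoc]
    exact mul_le_mul_of_nonneg_left (inv_one_add_le_one_sub_exp_neg_div hd) (hpos z₁).le
  · exact mul_one_sub_exp_neg_abs_div_abs_le_slope (fun t => (hf t).hasDerivAt)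
      (mul_exp_neg_abs_sub_le_of_abs_deriv_le hf' hpos hsc z₁) hne
end

section
/- (Generalized elliptical potential lemma.) Let {x_{t,i}} for t = 1,…,T and i ∈ Q_t (each Q_t a finite index set) be vectors in ℝ^d, let w_{t,i} > 0 be strictly positive weights, and let λ > 0. Define J_t = Σ_{s=1}^{t−1} Σ_{i∈Q_s} w_{s,i}·x_{s,i} x_{s,i}ᵀ + λ·I_d and x̃_{t,i} = √(w_{t,i})·x_{t,i}. Then: Σ_{t=1}^T min{ Σ_{i∈Q_t} ‖x̃_{t,i}‖²_{J_t^{-1}}, 1 } ≤ 2·log( det(J_{T+1}) / λ^d ). -/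
/-!
Write `A_t = Σ_{i∈Q_t} w_{t,i} x_{t,i} x_{t,i}ᵀ`, so `J_{t+1} = J_t + A_t` and the `t`-th summand
is `u_t = tr(J_t⁻¹ A_t)`. Conjugating by `J_t^{1/2}` gives `det J_{t+1} = det J_t · det(1 + M_t)`
with `M_t = J_t^{-1/2} A_t J_t^{-1/2}` positive semidefinite of trace `u_t`, and expanding the
product of the eigenvalues `1 + μ_k` of `1 + M_t` shows `det(1 + M_t) ≥ 1 + u_t`. Since
`min(u, 1) ≤ 2 log(1 + u)` for `u ≥ 0`, each summand is bounded by `2(log det J_{t+1} - log det J_t)`,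
and the sum telescopes to `2 log(det J_T / det J_0) = 2 log(det J_T / λ^d)`.
-/

open Matrix

theorem Finset.one_add_sum_le_prod_one_add {R α : Type*} [CommSemiring R] [PartialOrder R]
    [IsOrderedRing R] (s : Finset α) {f : α → R} (hf : ∀ i ∈ s, 0 ≤ f i) :
    1 + ∑ i ∈ s, f i ≤ ∏ i ∈ s, (1 + f i) := by
  classical
  induction s using Finset.induction_on with
  | empty => simp
  | insert a s ha ih =>
    rw [Finset.sum_insert ha, Finset.prod_insert ha]
    have hfa := hf a (mem_insert_self a s)
    have hs := fun i hi => hf i (mem_insert_of_mem hi)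
    calc 1 + (f a + ∑ i ∈ s, f i)
        ≤ 1 + (f a + ∑ i ∈ s, f i) + f a * ∑ i ∈ s, f i :=
          le_add_of_nonneg_right (mul_nonneg hfa (Finset.sum_nonneg hs))
      _ = (1 + f a) * (1 + ∑ i ∈ s, f i) := by ring
      _ ≤ (1 + f a) * ∏ i ∈ s, (1 + f i) :=
          mul_le_mul_of_nonneg_left (ih hs) (add_nonneg zero_le_one hfa)

theorem Real.min_le_two_mul_log_one_add {u : ℝ} (hu : 0 ≤ u) : min u 1 ≤ 2 * Real.log (1 + u) := by
  have hpos : 0 < 1 + u := by linarith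
  have hmin : min u 1 ≤ 2 * (u / (1 + u)) := by
    rw [← mul_div_assoc, le_div_iff₀ hpos]
    rcases le_total u 1 with h | h
    · rw [min_eq_left h]
      nlinarith
    · rw [min_eq_right h]
      linarith
  have hlog : u / (1 + u) ≤ Real.log (1 + u) := by
    have := Real.one_sub_inv_le_log_of_pos hpos
    rwa [show 1 - (1 + u)⁻¹ = u / (1 + u) by field_simp; ring] at this
  linarith

namespace Matrix

theorem trace_mul_vecMulVec_self {n R : Type*} [Fintype n] [CommSemiring R]
    (P : Matrix n n R) (v : n → R) : (P * vecMulVec v v).trace = v ⬝ᵥ P *ᵥ v := by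
  rw [mul_vecMulVec, trace_vecMulVec, dotProduct_comm]

variable {n : Type*} [Fintype n] [DecidableEq n]

theorem PosSemidef.one_add_trace_le_det_one_add {M : Matrix n n ℝ} (hM : M.PosSemidef) :
    1 + M.trace ≤ (1 + M).det := by
  have hcfc : cfc (fun x : ℝ => 1 + x) M = 1 + M := by
    rw [cfc_const_add (1 : ℝ) (fun x => x) M (ha := hM.1.isSelfAdjoint),
      cfc_id' ℝ M hM.1.isSelfAdjoint, map_one]
  rw [← hcfc, hM.1.cfc_eq, IsHermitian.cfc]
  simp [-Unitary.conjStarAlgAut_apply, hM.1.trace_eq_sum_eigenvalues]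
  exact Finset.one_add_sum_le_prod_one_add _ fun i _ => hM.eigenvalues_nonneg i

open scoped MatrixOrder in
theorem PosDef.exists_posSemidef_trace_eq_det_add_eq {J A : Matrix n n ℝ} (hJ : J.PosDef)
    (hA : A.PosSemidef) : ∃ M : Matrix n n ℝ, M.PosSemidef ∧ M.trace = (J⁻¹ * A).trace ∧
      (J + A).det = J.det * (1 + M).det := by
  set S := CFC.sqrt J
  have hSS : S * S = J := CFC.sqrt_mul_sqrt_self J hJ.posSemidef.nonneg
  have hS : S.IsHermitian := (CFC.sqrt_nonneg J).posSemidef.1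
  have hSdet : IsUnit S.det := by
    rw [isUnit_iff_ne_zero]
    intro h
    exact hJ.det_pos.ne' (by rw [← hSS, det_mul, h, zero_mul])
  refine ⟨S⁻¹ * A * S⁻¹, ?_, ?_, ?_⟩
  · have := hA.conjTranspose_mul_mul_same S⁻¹
    rwa [conjTranspose_nonsing_inv, hS.eq] at this
  · rw [trace_mul_comm, ← Matrix.mul_assoc, ← Matrix.mul_inv_rev, hSS]
  · have hfactor : J + A = S * (1 + S⁻¹ * A * S⁻¹) * S := by
      simp only [Matrix.mul_add, Matrix.add_mul, Matrix.mul_one, hSS, ← Matrix.mul_assoc,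
        mul_nonsing_inv _ hSdet, Matrix.one_mul]
      rw [Matrix.mul_assoc, nonsing_inv_mul _ hSdet, Matrix.mul_one]
    rw [hfactor, det_mul, det_mul, ← hSS, det_mul]
    ring

theorem PosDef.trace_inv_mul_nonneg {J A : Matrix n n ℝ} (hJ : J.PosDef) (hA : A.PosSemidef) :
    0 ≤ (J⁻¹ * A).trace := by
  obtain ⟨M, hM, htrace, -⟩ := hJ.exists_posSemidef_trace_eq_det_add_eq hA
  exact htrace ▸ hM.trace_nonneg

theorem PosDef.log_one_add_trace_inv_mul_le {J A : Matrix n n ℝ} (hJ : J.PosDef)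
    (hA : A.PosSemidef) :
    Real.log (1 + (J⁻¹ * A).trace) ≤ Real.log (J + A).det - Real.log J.det := by
  obtain ⟨M, hM, htrace, hdet⟩ := hJ.exists_posSemidef_trace_eq_det_add_eq hA
  have hu : 0 < 1 + (J⁻¹ * A).trace := by linarith [hJ.trace_inv_mul_nonneg hA]
  rw [le_sub_iff_add_le', ← Real.log_mul hJ.det_pos.ne' hu.ne', hdet, ← htrace]
  exact Real.log_le_log (mul_pos hJ.det_pos (htrace ▸ hu))
    (mul_le_mul_of_nonneg_left hM.one_add_trace_le_det_one_add hJ.det_pos.le)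

theorem PosDef.min_trace_inv_mul_one_le {J A : Matrix n n ℝ} (hJ : J.PosDef)
    (hA : A.PosSemidef) :
    min (J⁻¹ * A).trace 1 ≤ 2 * (Real.log (J + A).det - Real.log J.det) :=
  (Real.min_le_two_mul_log_one_add (hJ.trace_inv_mul_nonneg hA)).trans
    (mul_le_mul_of_nonneg_left (hJ.log_one_add_trace_inv_mul_le hA) zero_le_two)

end Matrix

/-- generalized elliptical potential lemma: with
`J_t = Σ_{s<t} Σ_{i∈Q_s} w_{s,i}·x_{s,i}x_{s,i}ᵀ + λI` (weights `w_{s,i} > 0`, `λ > 0`)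
and `x̃_{t,i} = √(w_{t,i})·x_{t,i}`,
`Σ_{t<T} min(Σ_{i∈Q_t} ‖x̃_{t,i}‖²_{J_t⁻¹}, 1) ≤ 2·log(det(J_T)/λ^d)` (the matrix after
all `T` rounds is `J_T` in this 0-indexed convention, i.e. `J_{T+1}` in the paper's). -/
theorem generalized_elliptical_potential {d : ℕ} {ι : Type*}
    (T : ℕ) (Q : ℕ → Finset ι) (x : ℕ → ι → Fin d → ℝ)
    (w : ℕ → ι → ℝ) (hw : ∀ t i, 0 < w t i)
    (lam : ℝ) (hlam : 0 < lam)
    (J : ℕ → Matrix (Fin d) (Fin d) ℝ)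
    (hJ : ∀ t, J t = (∑ s ∈ Finset.range t, ∑ i ∈ Q s,
        w s i • Matrix.vecMulVec (x s i) (x s i)) + lam • (1 : Matrix (Fin d) (Fin d) ℝ)) :
    ∑ t ∈ Finset.range T,
        min (∑ i ∈ Q t,
          (Real.sqrt (w t i) • x t i) ⬝ᵥ (J t)⁻¹.mulVec (Real.sqrt (w t i) • x t i)) 1
      ≤ 2 * Real.log ((J T).det / lam ^ d) := by
  set A : ℕ → Matrix (Fin d) (Fin d) ℝ := fun t => ∑ i ∈ Q t, w t i • vecMulVec (x t i) (x t i)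
  have hA : ∀ t, (A t).PosSemidef := fun t => posSemidef_sum _ fun i _ =>
    (by simpa using posSemidef_vecMulVec_self_star (x t i) : PosSemidef _).smul (hw t i).le
  have hJpos : ∀ t, (J t).PosDef := fun t => by
    rw [hJ t]
    exact PosDef.posSemidef_add (posSemidef_sum _ fun s _ => hA s) (PosDef.one.smul hlam)
  have hJsucc : ∀ t, J (t + 1) = J t + A t := fun t => by
    rw [hJ, hJ, Finset.sum_range_succ]
    abel
  have hsummand : ∀ t, ∑ i ∈ Q t, (Real.sqrt (w t i) • x t i) ⬝ᵥ (J t)⁻¹ *ᵥ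
      (Real.sqrt (w t i) • x t i) = ((J t)⁻¹ * A t).trace := fun t => by
    simp only [A, Matrix.mul_sum, trace_sum, Matrix.mul_smul, trace_smul, trace_mul_vecMulVec_self,
      mulVec_smul, dotProduct_smul, smul_dotProduct, smul_eq_mul, ← mul_assoc,
      Real.mul_self_sqrt (hw _ _).le]
  have hJ0 : (J 0).det = lam ^ d := by simp [hJ 0]
  calc _ ≤ ∑ t ∈ Finset.range T, 2 * (Real.log (J (t + 1)).det - Real.log (J t).det) :=
        Finset.sum_le_sum fun t _ => by
          rw [hsummand, hJsucc]
          exact (hJpos t).min_trace_inv_mul_one_le (hA t)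
    _ = 2 * Real.log ((J T).det / lam ^ d) := by
        rw [← Finset.mul_sum, Finset.sum_range_sub (fun t => Real.log (J t).det), hJ0,
          Real.log_div (hJpos T).det_pos.ne' (by positivity)]
end
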